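/- arXiv:1603.07841 — 2 statements merged into one kernel-verified Lean document; each statement's English description precedes it below -/
import Mathlib

section
/- Let 0 < q ≤ ∞, 0 < μ ≤ q and α > 0. Suppose {a_k}_{k∈ℕ₀} and {b_k}_{k∈ℕ₀} are sequences of real numbers such that |b_k| ≤ C₀ (Σ_{j=k+1}^{∞} |a_j|^μ)^{1/μ} for all k ∈ ℕ₀. Then (Σ_{k=0}^{∞} 2^{kαq} |b_k|^q)^{1/q} ≤ C (Σ_{k=0}^{∞} 2^{kαq} |a_k|^q)^{1/q} (with the sup-modification when q = ∞), where C > 0 depends only on C₀, α, μ, q and not on the sequences {a_k}, {b_k}. -/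
/-!
Put `A m = 2 ^ (m α) |a m|`. Multiplying the hypothesis by `2 ^ (k α)` gives
`2 ^ (k α) |b k| ≤ C₀ (∑ⱼ x ^ (j + 1) A (k + 1 + j) ^ μ) ^ (1 / μ)` with `x = 2 ^ (-α μ) < 1`,
so `b` is controlled by a correlation of `A ^ μ` with the summable geometric weights `x ^ (j + 1)`.
With `p = q / μ ≥ 1`, Jensen's inequality for the normalised weights and an interchange of sums
bound the `ℓ^p` norm of such a correlation by `∑ⱼ x ^ (j + 1)` times the `ℓ^p` norm of `A ^ μ`
(for `p = ∞` this is immediate), and taking `μ`-th roots gives the claim.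
-/

open MeasureTheory ENNReal Filter Topology

noncomputable section

def lqNorm (q : ℝ≥0∞) (a : ℕ → ℝ≥0∞) : ℝ≥0∞ :=
  if q = ∞ then ⨆ k, a k else (∑' k, a k ^ q.toReal) ^ (1 / q.toReal)

def lpSum {ι : Type*} (p : ℝ≥0∞) (a : ι → ℝ≥0∞) : ℝ≥0∞ :=
  if p = ∞ then ⨆ m, a m else (∑' m, a m ^ p.toReal) ^ (1 / p.toReal)

theorem lqNorm_mono {q : ℝ≥0∞} {f g : ℕ → ℝ≥0∞} (h : ∀ k, f k ≤ g k) :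
    lqNorm q f ≤ lqNorm q g := by
  unfold lqNorm
  split_ifs
  · exact iSup_mono h
  · gcongr with k
    exact h k

theorem lqNorm_const_mul {q : ℝ≥0∞} (hq : q ≠ 0) (c : ℝ≥0∞) (f : ℕ → ℝ≥0∞) :
    lqNorm q (fun k => c * f k) = c * lqNorm q f := by
  unfold lqNorm
  split_ifs with hqtop
  · exact (ENNReal.mul_iSup ..).symm
  · have hr : 0 < q.toReal := ENNReal.toReal_pos hq hqtop
    simp_rw [ENNReal.mul_rpow_of_nonneg _ _ hr.le, ENNReal.tsum_mul_left,
      ENNReal.mul_rpow_of_nonneg _ _ (one_div_pos.2 hr).le, ← ENNReal.rpow_mul,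
      mul_one_div_cancel hr.ne', ENNReal.rpow_one]

theorem lqNorm_rpow {q : ℝ≥0∞} (hq : q ≠ 0) {s : ℝ} (hs : 0 < s) (f : ℕ → ℝ≥0∞) :
    lqNorm q (fun k => f k ^ s) = lqNorm (q * ENNReal.ofReal s) f ^ s := by
  unfold lqNorm
  by_cases hqtop : q = ∞
  · rw [if_pos hqtop, if_pos (by simp [hqtop, hs])]
    exact ((ENNReal.orderIsoRpow s hs).map_iSup f).symm
  · have hr : 0 < q.toReal := ENNReal.toReal_pos hq hqtop
    rw [if_neg hqtop, if_neg (ENNReal.mul_ne_top hqtop ENNReal.ofReal_ne_top),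
      ENNReal.toReal_mul, ENNReal.toReal_ofReal hs.le, ← ENNReal.rpow_mul]
    simp_rw [← ENNReal.rpow_mul]
    congr 1
    · simp_rw [mul_comm s]
    · field_simp

theorem ENNReal.inner_le_Lp_mul_Lq_tsum {p q : ℝ} (hpq : p.HolderConjugate q) (f g : ℕ → ℝ≥0∞) :
    ∑' i, f i * g i ≤ (∑' i, f i ^ p) ^ (1 / p) * (∑' i, g i ^ q) ^ (1 / q) := by
  simpa [lintegral_count] using ENNReal.lintegral_mul_le_Lp_mul_Lq Measure.count hpq
    (measurable_from_nat (f := f)).aemeasurable (measurable_from_nat (f := g)).aemeasurable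

theorem rpow_tsum_mul_le {p : ℝ} (hp : 1 ≤ p) (w X : ℕ → ℝ≥0∞) :
    (∑' j, w j * X j) ^ p ≤ (∑' j, w j) ^ (p - 1) * ∑' j, w j * X j ^ p := by
  obtain rfl | hp1 := hp.eq_or_lt
  · simp
  set q := p.conjExponent
  have hpq : p.HolderConjugate q := .conjExponent hp1
  have hp0 : p ≠ 0 := hpq.pos.ne'
  have hq0 : q ≠ 0 := hpq.symm.pos.ne'
  -- Hölder's inequality applied to the splitting `w = w ^ (1 / q) * w ^ (1 / p)`.
  have hsplit : ∀ j, w j * X j = w j ^ (1 / q) * (w j ^ (1 / p) * X j) := fun j => by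
    rw [← mul_assoc, ← ENNReal.rpow_add_of_nonneg _ _ (one_div_nonneg.2 hpq.symm.pos.le)
      (one_div_nonneg.2 hpq.pos.le), one_div, one_div, add_comm, hpq.inv_add_inv_eq_one,
      ENNReal.rpow_one]
  have hw : ∀ j, (w j ^ (1 / q)) ^ q = w j := fun j => by
    rw [← ENNReal.rpow_mul, one_div_mul_cancel hq0, ENNReal.rpow_one]
  have hwX : ∀ j, (w j ^ (1 / p) * X j) ^ p = w j * X j ^ p := fun j => by
    rw [ENNReal.mul_rpow_of_nonneg _ _ hpq.nonneg, ← ENNReal.rpow_mul, one_div_mul_cancel hp0,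
      ENNReal.rpow_one]
  have hqp : 1 / q * p = p - 1 := by
    simp only [q, Real.conjExponent]
    field_simp
  calc (∑' j, w j * X j) ^ p
      = (∑' j, w j ^ (1 / q) * (w j ^ (1 / p) * X j)) ^ p := by rw [tsum_congr hsplit]
    _ ≤ ((∑' j, w j) ^ (1 / q) * (∑' j, w j * X j ^ p) ^ (1 / p)) ^ p := by
        rw [← tsum_congr hw, ← tsum_congr hwX]
        gcongr
        exact ENNReal.inner_le_Lp_mul_Lq_tsum hpq.symm _ _
    _ = (∑' j, w j) ^ (p - 1) * ∑' j, w j * X j ^ p := by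
        rw [ENNReal.mul_rpow_of_nonneg _ _ hpq.nonneg, ← ENNReal.rpow_mul, ← ENNReal.rpow_mul,
          one_div_mul_cancel hp0, ENNReal.rpow_one, hqp]

theorem tsum_tsum_mul_shift_le (w Y : ℕ → ℝ≥0∞) :
    ∑' k, ∑' j, w j * Y (k + 1 + j) ≤ (∑' j, w j) * ∑' m, Y m := by
  rw [ENNReal.tsum_comm, ← ENNReal.tsum_mul_right]
  refine ENNReal.tsum_le_tsum fun j => ?_
  rw [ENNReal.tsum_mul_left]
  gcongr w j * ?_
  exact ENNReal.tsum_comp_le_tsum_of_injective (fun m n h => by omega) Y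

theorem tsum_rpow_tsum_mul_shift_le {r : ℝ} (hr : 1 ≤ r) (w X : ℕ → ℝ≥0∞) :
    ∑' k, (∑' j, w j * X (k + 1 + j)) ^ r ≤ (∑' j, w j) ^ r * ∑' m, X m ^ r := by
  set S := ∑' j, w j
  calc ∑' k, (∑' j, w j * X (k + 1 + j)) ^ r
      ≤ ∑' k, S ^ (r - 1) * ∑' j, w j * X (k + 1 + j) ^ r :=
        ENNReal.tsum_le_tsum fun k => rpow_tsum_mul_le hr w _
    _ = S ^ (r - 1) * ∑' k, ∑' j, w j * X (k + 1 + j) ^ r := ENNReal.tsum_mul_left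
    _ ≤ S ^ (r - 1) * (S * ∑' m, X m ^ r) := by
        gcongr
        exact tsum_tsum_mul_shift_le w (fun m => X m ^ r)
    _ = S ^ r * ∑' m, X m ^ r := by
        have hS : S ^ (r - 1) * S = S ^ r := by
          simpa using
            (ENNReal.rpow_add_of_nonneg (x := S) (r - 1) 1 (by linarith) zero_le_one).symm
        rw [← mul_assoc, hS]

theorem lqNorm_tsum_mul_shift_le {p : ℝ≥0∞} (hp : 1 ≤ p) (w X : ℕ → ℝ≥0∞) :
    lqNorm p (fun k => ∑' j, w j * X (k + 1 + j)) ≤ (∑' j, w j) * lqNorm p X := by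
  unfold lqNorm
  split_ifs with hptop
  · refine iSup_le fun k => ?_
    rw [← ENNReal.tsum_mul_right]
    exact ENNReal.tsum_le_tsum fun j => by gcongr; exact le_iSup X _
  · have hr : 1 ≤ p.toReal := by
      simpa using ENNReal.toReal_mono hptop hp
    have hr0 : 0 < p.toReal := zero_lt_one.trans_le hr
    calc (∑' k, (∑' j, w j * X (k + 1 + j)) ^ p.toReal) ^ (1 / p.toReal)
        ≤ ((∑' j, w j) ^ p.toReal * ∑' m, X m ^ p.toReal) ^ (1 / p.toReal) := by
          gcongr
          exact tsum_rpow_tsum_mul_shift_le hr w X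
      _ = (∑' j, w j) * (∑' m, X m ^ p.toReal) ^ (1 / p.toReal) := by
          rw [ENNReal.mul_rpow_of_nonneg _ _ (by positivity), ← ENNReal.rpow_mul,
            mul_one_div_cancel hr0.ne', ENNReal.rpow_one]

theorem lqNorm_rpow_tsum_mul_shift_le {q : ℝ≥0∞} {μ : ℝ} (hμ : 0 < μ)
    (hμq : ENNReal.ofReal μ ≤ q) (w A : ℕ → ℝ≥0∞) :
    lqNorm q (fun k => (∑' j, w j * A (k + 1 + j) ^ μ) ^ (1 / μ)) ≤
      (∑' j, w j) ^ (1 / μ) * lqNorm q A := by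
  have hq : q ≠ 0 := ((ENNReal.ofReal_pos.2 hμ).trans_le hμq).ne'
  set p := q * ENNReal.ofReal (1 / μ) with hpdef
  have hp : 1 ≤ p := by
    rwa [hpdef, ENNReal.ofReal_div_of_pos hμ, ENNReal.ofReal_one, ← div_eq_mul_one_div,
      ENNReal.le_div_iff_mul_le (.inl (by simpa using hμ)) (.inl ENNReal.ofReal_ne_top), one_mul]
  have hpμ : p * ENNReal.ofReal μ = q := by
    rw [mul_assoc, ← ENNReal.ofReal_mul (by positivity), one_div_mul_cancel hμ.ne',
      ENNReal.ofReal_one, mul_one]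
  calc lqNorm q (fun k => (∑' j, w j * A (k + 1 + j) ^ μ) ^ (1 / μ))
      = lqNorm p (fun k => ∑' j, w j * A (k + 1 + j) ^ μ) ^ (1 / μ) :=
        lqNorm_rpow hq (one_div_pos.2 hμ) _
    _ ≤ ((∑' j, w j) * lqNorm p (fun m => A m ^ μ)) ^ (1 / μ) := by
        gcongr
        exact lqNorm_tsum_mul_shift_le hp w (fun m => A m ^ μ)
    _ = (∑' j, w j) ^ (1 / μ) * lqNorm q A := by
        rw [lqNorm_rpow (zero_lt_one.trans_le hp).ne' hμ, hpμ,
          ENNReal.mul_rpow_of_nonneg _ _ (by positivity), ← ENNReal.rpow_mul,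
          mul_one_div_cancel hμ.ne', ENNReal.rpow_one]

theorem tsum_pow_succ_ne_top {x : ℝ≥0∞} (hx : x < 1) : ∑' j : ℕ, x ^ (j + 1) ≠ ∞ :=
  (ENNReal.tsum_geometric_add_one x).trans_ne <|
    ENNReal.mul_ne_top (hx.trans ENNReal.one_lt_top).ne
      (ENNReal.inv_ne_top.2 (tsub_pos_of_lt hx).ne')

theorem mul_tsum_rpow_one_div {μ : ℝ} (hμ : 0 < μ) (c : ℝ≥0∞) (f : ℕ → ℝ≥0∞) :
    c * (∑' j, f j) ^ (1 / μ) = (∑' j, c ^ μ * f j) ^ (1 / μ) := by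
  rw [ENNReal.tsum_mul_left, ENNReal.mul_rpow_of_nonneg _ _ (by positivity), ← ENNReal.rpow_mul,
    mul_one_div_cancel hμ.ne', ENNReal.rpow_one]

theorem two_rpow_mul_tsum_rpow_eq {μ : ℝ} (hμ : 0 < μ) (α : ℝ) (a : ℕ → ℝ) (k : ℕ) :
    (2 : ℝ≥0∞) ^ ((k : ℝ) * α) * (∑' j : ℕ, ENNReal.ofReal (|a (k + 1 + j)| ^ μ)) ^ (1 / μ) =
      (∑' j : ℕ, ((2 : ℝ≥0∞) ^ (-(α * μ))) ^ (j + 1) *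
        ENNReal.ofReal (2 ^ (((k + 1 + j : ℕ) : ℝ) * α) * |a (k + 1 + j)|) ^ μ) ^ (1 / μ) := by
  rw [mul_tsum_rpow_one_div hμ]
  congr 1
  refine tsum_congr fun j => ?_
  rw [ENNReal.ofReal_mul (by positivity), ← ENNReal.ofReal_rpow_of_pos two_pos,
    ENNReal.ofReal_ofNat, ENNReal.mul_rpow_of_nonneg _ _ hμ.le,
    ← ENNReal.ofReal_rpow_of_nonneg (abs_nonneg _) hμ.le, ← mul_assoc, ← ENNReal.rpow_natCast,
    ← ENNReal.rpow_mul, ← ENNReal.rpow_mul, ← ENNReal.rpow_mul,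
    ← ENNReal.rpow_add _ _ two_ne_zero ENNReal.ofNat_ne_top]
  congr 2
  push_cast
  ring

theorem hardy_inequality_case_two_general (q : ℝ≥0∞)
    (μ α C₀ : ℝ) (hμ : 0 < μ) (hμq : ENNReal.ofReal μ ≤ q)
    (hα : 0 < α) (hC₀ : 0 < C₀) :
    ∃ C : ℝ, 0 < C ∧ ∀ a b : ℕ → ℝ,
      (∀ k : ℕ, ENNReal.ofReal |b k| ≤ ENNReal.ofReal C₀ *
          (∑' j : ℕ, ENNReal.ofReal (|a (k + 1 + j)| ^ μ)) ^ (1 / μ)) →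
      lqNorm q (fun k => ENNReal.ofReal (2 ^ ((k : ℝ) * α) * |b k|)) ≤
        ENNReal.ofReal C *
          lqNorm q (fun k => ENNReal.ofReal (2 ^ ((k : ℝ) * α) * |a k|)) := by
  set x : ℝ≥0∞ := 2 ^ (-(α * μ))
  set S := ∑' j : ℕ, x ^ (j + 1)
  have hx1 : x < 1 :=
    ENNReal.rpow_lt_one_of_one_lt_of_neg (by norm_num) (neg_neg_of_pos (mul_pos hα hμ))
  have hStop : S ≠ ∞ := tsum_pow_succ_ne_top hx1
  have hS : 0 < S.toReal :=
    ENNReal.toReal_pos (fun h => by simpa [x] using ENNReal.tsum_eq_zero.1 h 0) hStop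
  refine ⟨C₀ * S.toReal ^ (1 / μ), by positivity, fun a b hab => ?_⟩
  set A : ℕ → ℝ≥0∞ := fun m => ENNReal.ofReal (2 ^ ((m : ℝ) * α) * |a m|)
  have hpt : ∀ k : ℕ, ENNReal.ofReal (2 ^ ((k : ℝ) * α) * |b k|) ≤
      ENNReal.ofReal C₀ * (∑' j, x ^ (j + 1) * A (k + 1 + j) ^ μ) ^ (1 / μ) := fun k => by
    rw [← two_rpow_mul_tsum_rpow_eq hμ, ENNReal.ofReal_mul (by positivity),
      ← ENNReal.ofReal_rpow_of_pos two_pos, ENNReal.ofReal_ofNat, mul_left_comm]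
    gcongr
    exact hab k
  calc lqNorm q (fun k => ENNReal.ofReal (2 ^ ((k : ℝ) * α) * |b k|))
      ≤ lqNorm q (fun k =>
          ENNReal.ofReal C₀ * (∑' j, x ^ (j + 1) * A (k + 1 + j) ^ μ) ^ (1 / μ)) :=
        lqNorm_mono hpt
    _ ≤ ENNReal.ofReal C₀ * (S ^ (1 / μ) * lqNorm q A) := by
        rw [lqNorm_const_mul ((ENNReal.ofReal_pos.2 hμ).trans_le hμq).ne']
        gcongr
        exact lqNorm_rpow_tsum_mul_shift_le hμ hμq _ A
    _ = ENNReal.ofReal (C₀ * S.toReal ^ (1 / μ)) * lqNorm q A := by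
        rw [ENNReal.ofReal_mul hC₀.le, ← ENNReal.ofReal_rpow_of_pos hS,
          ENNReal.ofReal_toReal hStop, mul_assoc]

/-- discrete Hardy inequality, second case. -/
theorem hardy_inequality_case_two (q : ℝ≥0∞) (hq : 0 < q)
    (μ α C₀ : ℝ) (hμ : 0 < μ) (hμq : ENNReal.ofReal μ ≤ q)
    (hα : 0 < α) (hC₀ : 0 < C₀) :
    ∃ C : ℝ, 0 < C ∧ ∀ a b : ℕ → ℝ,
      (∀ k : ℕ, ENNReal.ofReal |b k| ≤ ENNReal.ofReal C₀ *
          (∑' j : ℕ, ENNReal.ofReal (|a (k + 1 + j)| ^ μ)) ^ (1 / μ)) →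
      lqNorm q (fun k => ENNReal.ofReal (2 ^ ((k : ℝ) * α) * |b k|)) ≤
        ENNReal.ofReal C *
          lqNorm q (fun k => ENNReal.ofReal (2 ^ ((k : ℝ) * α) * |a k|)) :=
  hardy_inequality_case_two_general q μ α C₀ hμ hμq hα hC₀
end
end

section
/- Let p ∈ (0,∞], σ₁ ∈ (0,∞), σ₂ ∈ (0,∞], α₁, α₂ ∈ ℝ, α₃ ≥ 0, and let {t_k} be a p-admissible weight sequence such that {t̄_k} ∈ 𝒳^{α₃}_{α,σ,p}, where α = (α₁,α₂), σ = (σ₁,σ₂). Then for all 0 ≤ k ≤ j and all m ∈ ℤⁿ: t_{k,m} (Σ_{m̃ ∈ ℤⁿ : Q_{j,m̃} ⊂ Q_{k,m}} t_{j,m̃}^{-σ₁})^{1/σ₁} ≤ C 2^{(α₁ - n/p - n/σ₁)(k-j)}, where C > 0 depends only on n, p, σ₁ and the constants in the definition of 𝒳^{α₃}_{α,σ,p}, and not on k, j, m. -/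
open MeasureTheory ENNReal Filter Topology

noncomputable section

def dyadicCube (n k : ℕ) (m : Fin n → ℤ) : Set (Fin n → ℝ) :=
  {x | ∀ i, (m i : ℝ) / 2 ^ k ≤ x i ∧ x i ≤ ((m i : ℝ) + 1) / 2 ^ k}

def dilatedCube (n : ℕ) (c : ℝ) (k : ℕ) (m : Fin n → ℤ) : Set (Fin n → ℝ) :=
  {x | ∀ i, |x i - ((m i : ℝ) + 1 / 2) / 2 ^ k| ≤ c / (2 * 2 ^ k)}

def tkm (n : ℕ) (p : ℝ≥0∞) (t : ℕ → (Fin n → ℝ) → ℝ) (k : ℕ) (m : Fin n → ℤ) : ℝ≥0∞ :=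
  eLpNorm (t k) p (volume.restrict (dyadicCube n k m))

def PAdmissible (n : ℕ) (p : ℝ≥0∞) (t : ℕ → (Fin n → ℝ) → ℝ) : Prop :=
  (∀ k, Measurable (t k)) ∧ (∀ k, ∀ᵐ x : Fin n → ℝ, 0 < t k x) ∧
    ∀ k m, tkm n p t k m < ∞

def MemX (n : ℕ) (p σ₁ σ₂ : ℝ≥0∞) (α₁ α₂ α₃ : ℝ) (t : ℕ → (Fin n → ℝ) → ℝ) : Prop :=
  PAdmissible n p t ∧
  (∃ C₁ : ℝ, 0 < C₁ ∧ ∀ k j : ℕ, k ≤ j → ∀ m : Fin n → ℤ,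
    (((2 : ℝ≥0∞) ^ (k * n)) ^ p⁻¹.toReal * tkm n p t k m) *
      (((2 : ℝ≥0∞) ^ (k * n)) ^ σ₁⁻¹.toReal *
        eLpNorm (fun x => (t j x)⁻¹) σ₁ (volume.restrict (dyadicCube n k m)))
      ≤ ENNReal.ofReal (C₁ * 2 ^ (α₁ * ((k : ℝ) - (j : ℝ))))) ∧
  (∃ C₂ : ℝ, 0 < C₂ ∧ ∀ k j : ℕ, k ≤ j → ∀ m : Fin n → ℤ,
    ((2 : ℝ≥0∞) ^ (k * n)) ^ σ₂⁻¹.toReal *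
        eLpNorm (t j) σ₂ (volume.restrict (dyadicCube n k m))
      ≤ ENNReal.ofReal (C₂ * 2 ^ (α₂ * ((j : ℝ) - (k : ℝ)))) *
        (((2 : ℝ≥0∞) ^ (k * n)) ^ p⁻¹.toReal * tkm n p t k m)) ∧
  (∀ k m, 0 < tkm n p t k m) ∧
  (∀ (k : ℕ) (m m' : Fin n → ℤ), (∀ i, |m i - m' i| ≤ 1) →
    tkm n p t k m ≤ ENNReal.ofReal (2 ^ α₃) * tkm n p t k m')

def tbar (n : ℕ) (p : ℝ≥0∞) (t : ℕ → (Fin n → ℝ) → ℝ) (k : ℕ) (x : Fin n → ℝ) : ℝ :=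
  (2 : ℝ) ^ (((k * n : ℕ) : ℝ) / p.toReal) * (tkm n p t k fun i => ⌊x i * 2 ^ k⌋).toReal

/-! On each half-open cube `Q̃_{j,m'}` the step weight `t̄_j` is the constant `2^{jn/p} t_{j,m'}`,
and for `j ≥ k` these cubes tile `Q̃_{k,m}`, which differs from `Q_{k,m}` by a null set. Hence
`‖t̄_k‖_{L_p(Q_{k,m})} = t_{k,m}` and
`‖t̄_j⁻¹‖_{L_{σ₁}(Q_{k,m})} = 2^{-jn/p - jn/σ₁} (∑ t_{j,m'}^{-σ₁})^{1/σ₁}`, so condition (i) for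
`{t̄_k}` is, after collecting the powers of two, the claimed estimate with `C = C₁`. -/

open Set

def halfOpenDyadicCube (n k : ℕ) (m : Fin n → ℤ) : Set (Fin n → ℝ) :=
  univ.pi fun i => Ico ((m i : ℝ) / 2 ^ k) (((m i : ℝ) + 1) / 2 ^ k)

section DyadicCubes

variable {n k j : ℕ} {m m' : Fin n → ℤ} {x : Fin n → ℝ}

lemma mem_halfOpenDyadicCube_iff_floor :
    x ∈ halfOpenDyadicCube n k m ↔ (fun i => ⌊x i * 2 ^ k⌋) = m := by
  simp only [halfOpenDyadicCube, mem_univ_pi, mem_Ico, funext_iff, Int.floor_eq_iff]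
  refine forall_congr' fun i => ?_
  rw [div_le_iff₀ (by positivity), lt_div_iff₀ (by positivity)]

lemma measurableSet_halfOpenDyadicCube : MeasurableSet (halfOpenDyadicCube n k m) :=
  .univ_pi fun _ => measurableSet_Ico

lemma dyadicCube_eq_Icc :
    dyadicCube n k m = Icc (fun i => (m i : ℝ) / 2 ^ k) (fun i => ((m i : ℝ) + 1) / 2 ^ k) := by
  ext x
  simp [dyadicCube, Pi.le_def, forall_and]

lemma dyadicCube_eq_pi :
    dyadicCube n k m = univ.pi fun i => Icc ((m i : ℝ) / 2 ^ k) (((m i : ℝ) + 1) / 2 ^ k) := by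
  rw [pi_univ_Icc, dyadicCube_eq_Icc]

lemma restrict_dyadicCube :
    volume.restrict (dyadicCube n k m) = volume.restrict (halfOpenDyadicCube n k m) := by
  refine Measure.restrict_congr_set ?_
  rw [dyadicCube_eq_Icc]
  exact Measure.univ_pi_Ico_ae_eq_Icc.symm

lemma volume_halfOpenDyadicCube :
    volume (halfOpenDyadicCube n k m) = 2 ^ (-((k * n : ℕ) : ℝ)) := by
  simp only [halfOpenDyadicCube, volume_pi_pi, Real.volume_Ico, ← sub_div, add_sub_cancel_left]
  simp only [one_div, Nat.ofNat_pos, pow_pos, ofReal_inv_of_pos, Nat.ofNat_nonneg, ofReal_pow,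
    ofReal_ofNat, ← rpow_natCast, Finset.prod_const, Finset.card_univ, Fintype.card_fin,
    Nat.cast_mul, rpow_neg]
  rw [ENNReal.inv_rpow, ← ENNReal.rpow_mul]

lemma int_div_two_pow_eq (hkj : k ≤ j) (a : ℤ) :
    (a : ℝ) / 2 ^ k = ((a * 2 ^ (j - k) : ℤ) : ℝ) / 2 ^ j := by
  obtain ⟨d, rfl⟩ := Nat.exists_eq_add_of_le hkj
  push_cast
  rw [Nat.add_sub_cancel_left, pow_add]
  field_simp

lemma Icc_floor_subset_Icc (hkj : k ≤ j) {a : ℤ} {y : ℝ}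
    (hy : y ∈ Ico ((a : ℝ) / 2 ^ k) ((a + 1) / 2 ^ k)) :
    Icc ((⌊y * 2 ^ j⌋ : ℝ) / 2 ^ j) ((⌊y * 2 ^ j⌋ + 1) / 2 ^ j) ⊆
      Icc ((a : ℝ) / 2 ^ k) ((a + 1) / 2 ^ k) := by
  have h2 : (0 : ℝ) < 2 ^ j := by positivity
  rw [Icc_subset_Icc_iff (by gcongr; linarith)]
  rw [show (a : ℝ) + 1 = ((a + 1 : ℤ) : ℝ) by push_cast; ring, int_div_two_pow_eq hkj,
    int_div_two_pow_eq hkj (a + 1)] at hy ⊢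
  constructor
  · gcongr
    exact Int.le_floor.mpr ((div_le_iff₀ h2).mp hy.1)
  · gcongr
    exact_mod_cast Int.floor_lt.mpr ((lt_div_iff₀ h2).mp hy.2)

lemma dyadicCube_floor_subset (hkj : k ≤ j) (hx : x ∈ halfOpenDyadicCube n k m) :
    dyadicCube n j (fun i => ⌊x i * 2 ^ j⌋) ⊆ dyadicCube n k m := by
  rw [dyadicCube_eq_pi, dyadicCube_eq_pi]
  exact pi_mono fun i _ => Icc_floor_subset_Icc hkj (hx i (mem_univ i))

lemma halfOpenDyadicCube_subset_of_dyadicCube_subset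
    (h : dyadicCube n j m' ⊆ dyadicCube n k m) :
    halfOpenDyadicCube n j m' ⊆ halfOpenDyadicCube n k m := by
  rw [dyadicCube_eq_Icc, dyadicCube_eq_Icc,
    Icc_subset_Icc_iff fun i => by dsimp only; gcongr; linarith] at h
  exact pi_mono fun i _ => Ico_subset_Ico (h.1 i) (h.2 i)

lemma halfOpenDyadicCube_eq_iUnion (hkj : k ≤ j) (m : Fin n → ℤ) :
    halfOpenDyadicCube n k m =
      ⋃ m' : {m' // dyadicCube n j m' ⊆ dyadicCube n k m}, halfOpenDyadicCube n j m' := by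
  refine subset_antisymm (fun x hx => ?_)
    (iUnion_subset fun m' => halfOpenDyadicCube_subset_of_dyadicCube_subset m'.2)
  exact mem_iUnion.mpr ⟨⟨_, dyadicCube_floor_subset hkj hx⟩,
    mem_halfOpenDyadicCube_iff_floor.mpr rfl⟩

lemma pairwise_disjoint_halfOpenDyadicCube :
    Pairwise (Function.onFun Disjoint (halfOpenDyadicCube n k)) :=
  fun _ _ hne => disjoint_left.mpr fun _ hm hm' => hne <|
    (mem_halfOpenDyadicCube_iff_floor.mp hm).symm.trans (mem_halfOpenDyadicCube_iff_floor.mp hm')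

end DyadicCubes

lemma ENNReal.two_rpow_mul_two_rpow (x y : ℝ) : (2 : ℝ≥0∞) ^ x * 2 ^ y = 2 ^ (x + y) :=
  (ENNReal.rpow_add x y two_ne_zero ofNat_ne_top).symm

lemma ENNReal.ofReal_two_rpow (x : ℝ) : ENNReal.ofReal (2 ^ x) = 2 ^ x := by
  rw [← ENNReal.ofReal_rpow_of_pos two_pos, ENNReal.ofReal_ofNat]

lemma ENNReal.le_ofReal_mul_two_rpow_sub {a : ℝ≥0∞} {C e γ : ℝ} (hC : 0 ≤ C)
    (h : 2 ^ γ * a ≤ ENNReal.ofReal (C * 2 ^ e)) : a ≤ ENNReal.ofReal (C * 2 ^ (e - γ)) := by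
  rw [ENNReal.ofReal_mul hC, ENNReal.ofReal_two_rpow] at h ⊢
  calc a = 2 ^ (-γ) * (2 ^ γ * a) := by
        rw [← mul_assoc, ENNReal.two_rpow_mul_two_rpow, neg_add_cancel, ENNReal.rpow_zero, one_mul]
    _ ≤ 2 ^ (-γ) * (ENNReal.ofReal C * 2 ^ e) := by gcongr
    _ = ENNReal.ofReal C * 2 ^ (e - γ) := by
        rw [mul_left_comm, ENNReal.two_rpow_mul_two_rpow, neg_add_eq_sub]

section StepWeights

variable {n : ℕ} {p : ℝ≥0∞} {t : ℕ → (Fin n → ℝ) → ℝ} {k : ℕ} {m : Fin n → ℤ} {x : Fin n → ℝ}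

lemma enorm_tbar_of_mem (hx : x ∈ halfOpenDyadicCube n k m) (hfin : tkm n p t k m ≠ ∞) :
    ‖tbar n p t k x‖ₑ = 2 ^ (((k * n : ℕ) : ℝ) / p.toReal) * tkm n p t k m := by
  rw [tbar, mem_halfOpenDyadicCube_iff_floor.mp hx, Real.enorm_eq_ofReal (by positivity),
    ENNReal.ofReal_mul (by positivity), ENNReal.ofReal_two_rpow, ENNReal.ofReal_toReal hfin]

lemma tkm_tbar (hp : p ≠ 0) (hfin : tkm n p t k m ≠ ∞) :
    tkm n p (tbar n p t) k m = tkm n p t k m := by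
  have hne : volume.restrict (halfOpenDyadicCube n k m) ≠ 0 := by
    simp [Measure.restrict_eq_zero, volume_halfOpenDyadicCube]
  have hconst : (fun x => ‖tbar n p t k x‖ₑ) =ᵐ[volume.restrict (halfOpenDyadicCube n k m)]
      fun _ => 2 ^ (((k * n : ℕ) : ℝ) / p.toReal) * tkm n p t k m :=
    ae_restrict_of_forall_mem measurableSet_halfOpenDyadicCube fun x hx =>
      enorm_tbar_of_mem hx hfin
  rw [tkm, restrict_dyadicCube, ← eLpNorm_enorm, eLpNorm_congr_ae hconst, eLpNorm_const _ hp hne,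
    Measure.restrict_apply_univ, volume_halfOpenDyadicCube, enorm_eq_self, ← ENNReal.rpow_mul,
    mul_right_comm, ENNReal.two_rpow_mul_two_rpow, div_eq_mul_one_div, ← add_mul, add_neg_cancel, zero_mul, ENNReal.rpow_zero, one_mul]

lemma enorm_inv_tbar_rpow_of_mem {σ : ℝ} (hσ : 0 ≤ σ) (hx : x ∈ halfOpenDyadicCube n k m)
    (hpos : tkm n p t k m ≠ 0) (hfin : tkm n p t k m ≠ ∞) :
    ‖(tbar n p t k x)⁻¹‖ₑ ^ σ =
      2 ^ (-(((k * n : ℕ) : ℝ) / p.toReal) * σ) * (tkm n p t k m)⁻¹ ^ σ := by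
  have h0 : tbar n p t k x ≠ 0 := by
    rw [tbar, mem_halfOpenDyadicCube_iff_floor.mp hx]
    exact mul_ne_zero (by positivity) (ENNReal.toReal_pos hpos hfin).ne'
  rw [enorm_inv h0, enorm_tbar_of_mem hx hfin, ENNReal.mul_inv (by simp) (by simp),
    ENNReal.mul_rpow_of_nonneg _ _ hσ, ← ENNReal.rpow_neg, ← ENNReal.rpow_mul]

lemma eLpNorm_inv_tbar {σ : ℝ≥0∞} (hσ : σ ≠ 0) (hσ_top : σ ≠ ∞) {j : ℕ} (hkj : k ≤ j)
    (hpos : ∀ m', tkm n p t j m' ≠ 0) (hfin : ∀ m', tkm n p t j m' ≠ ∞) :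
    eLpNorm (fun x => (tbar n p t j x)⁻¹) σ (volume.restrict (dyadicCube n k m)) =
      2 ^ (-(((j * n : ℕ) : ℝ) / p.toReal) - ((j * n : ℕ) : ℝ) / σ.toReal) *
        (∑' m' : {m' // dyadicCube n j m' ⊆ dyadicCube n k m},
          (tkm n p t j m'.1)⁻¹ ^ σ.toReal) ^ (1 / σ.toReal) := by
  have hσ' : 0 < σ.toReal := ENNReal.toReal_pos hσ hσ_top
  rw [eLpNorm_eq_lintegral_rpow_enorm_toReal hσ hσ_top, restrict_dyadicCube,
    halfOpenDyadicCube_eq_iUnion hkj, lintegral_iUnion (fun _ => measurableSet_halfOpenDyadicCube)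
      (pairwise_disjoint_halfOpenDyadicCube.comp_of_injective Subtype.val_injective)]
  have hpiece (m' : {m' // dyadicCube n j m' ⊆ dyadicCube n k m}) :
      ∫⁻ x in halfOpenDyadicCube n j m', ‖(tbar n p t j x)⁻¹‖ₑ ^ σ.toReal =
        2 ^ (-(((j * n : ℕ) : ℝ) / p.toReal) * σ.toReal) * 2 ^ (-((j * n : ℕ) : ℝ)) *
          (tkm n p t j m'.1)⁻¹ ^ σ.toReal := by
    rw [setLIntegral_congr_fun measurableSet_halfOpenDyadicCube fun x hx =>
      enorm_inv_tbar_rpow_of_mem hσ'.le hx (hpos m'.1) (hfin m'.1), setLIntegral_const,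
      volume_halfOpenDyadicCube, mul_right_comm]
  rw [tsum_congr hpiece, ENNReal.tsum_mul_left, ENNReal.mul_rpow_of_nonneg _ _ (by positivity), ENNReal.two_rpow_mul_two_rpow, ← ENNReal.rpow_mul]
  congr 2
  field_simp
  ring

lemma scaled_tkm_mul_eLpNorm_inv_tbar (hp : p ≠ 0) {σ : ℝ≥0∞} (hσ : σ ≠ 0) (hσ_top : σ ≠ ∞)
    {j : ℕ} (hkj : k ≤ j) (hpos : ∀ m', tkm n p t j m' ≠ 0) (hfin : ∀ k m, tkm n p t k m ≠ ∞) :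
    (((2 : ℝ≥0∞) ^ (k * n)) ^ p⁻¹.toReal * tkm n p (tbar n p t) k m) *
        (((2 : ℝ≥0∞) ^ (k * n)) ^ σ⁻¹.toReal *
          eLpNorm (fun x => (tbar n p t j x)⁻¹) σ (volume.restrict (dyadicCube n k m))) =
      2 ^ ((n / p.toReal + n / σ.toReal) * ((k : ℝ) - j)) *
        (tkm n p t k m * (∑' m' : {m' // dyadicCube n j m' ⊆ dyadicCube n k m},
          (tkm n p t j m'.1)⁻¹ ^ σ.toReal) ^ (1 / σ.toReal)) := by
  rw [tkm_tbar hp (hfin k m), eLpNorm_inv_tbar hσ hσ_top hkj hpos (hfin j),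
    ← ENNReal.rpow_natCast, ← ENNReal.rpow_mul, ← ENNReal.rpow_mul, ENNReal.toReal_inv,
    ENNReal.toReal_inv]
  set S := (∑' m' : {m' // dyadicCube n j m' ⊆ dyadicCube n k m},
    (tkm n p t j m'.1)⁻¹ ^ σ.toReal) ^ (1 / σ.toReal)
  calc _ = 2 ^ (((k * n : ℕ) : ℝ) * p.toReal⁻¹) * 2 ^ (((k * n : ℕ) : ℝ) * σ.toReal⁻¹) *
        2 ^ (-(((j * n : ℕ) : ℝ) / p.toReal) - ((j * n : ℕ) : ℝ) / σ.toReal) *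
          (tkm n p t k m * S) := by ring
    _ = _ := by
      rw [ENNReal.two_rpow_mul_two_rpow, ENNReal.two_rpow_mul_two_rpow]
      congr 2
      push_cast
      ring

end StepWeights

theorem weight_sum_estimate_general (n : ℕ) (p σ₁ σ₂ : ℝ≥0∞) (α₁ α₂ α₃ : ℝ)
    (hp : 0 < p) (hσ₁ : 0 < σ₁) (hσ₁fin : σ₁ ≠ ∞)
    (t : ℕ → (Fin n → ℝ) → ℝ) (hadm : PAdmissible n p t)
    (ht : MemX n p σ₁ σ₂ α₁ α₂ α₃ (tbar n p t)) :
    ∃ C : ℝ, 0 < C ∧ ∀ k j : ℕ, k ≤ j → ∀ m : Fin n → ℤ,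
      tkm n p t k m *
        (∑' m' : {m' : Fin n → ℤ // dyadicCube n j m' ⊆ dyadicCube n k m},
            (tkm n p t j m'.1)⁻¹ ^ σ₁.toReal) ^ (1 / σ₁.toReal) ≤
      ENNReal.ofReal
        (C * 2 ^ ((α₁ - n / p.toReal - n / σ₁.toReal) * ((k : ℝ) - (j : ℝ)))) := by
  obtain ⟨-, ⟨C₁, hC₁, hC⟩, -, hpos, -⟩ := ht
  have hfin (k m) : tkm n p t k m ≠ ∞ := (hadm.2.2 k m).ne
  have hne_zero (k m) : tkm n p t k m ≠ 0 := tkm_tbar hp.ne' (hfin k m) ▸ (hpos k m).ne'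
  refine ⟨C₁, hC₁, fun k j hkj m => ?_⟩
  have h := hC k j hkj m
  rw [scaled_tkm_mul_eLpNorm_inv_tbar hp.ne' hσ₁.ne' hσ₁fin hkj (hne_zero j) hfin] at h
  convert ENNReal.le_ofReal_mul_two_rpow_sub hC₁.le h using 4
  ring

/-- estimate (2.7) for the sums of reciprocal local norms. -/
theorem weight_sum_estimate (n : ℕ) (p σ₁ σ₂ : ℝ≥0∞) (α₁ α₂ α₃ : ℝ)
    (hp : 0 < p) (hσ₁ : 0 < σ₁) (hσ₁fin : σ₁ ≠ ∞) (hσ₂ : 0 < σ₂) (hα₃ : 0 ≤ α₃)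
    (t : ℕ → (Fin n → ℝ) → ℝ) (hadm : PAdmissible n p t)
    (ht : MemX n p σ₁ σ₂ α₁ α₂ α₃ (tbar n p t)) :
    ∃ C : ℝ, 0 < C ∧ ∀ k j : ℕ, k ≤ j → ∀ m : Fin n → ℤ,
      tkm n p t k m *
        (∑' m' : {m' : Fin n → ℤ // dyadicCube n j m' ⊆ dyadicCube n k m},
            (tkm n p t j m'.1)⁻¹ ^ σ₁.toReal) ^ (1 / σ₁.toReal) ≤
      ENNReal.ofReal
        (C * 2 ^ ((α₁ - n / p.toReal - n / σ₁.toReal) * ((k : ℝ) - (j : ℝ)))) :=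
  weight_sum_estimate_general n p σ₁ σ₂ α₁ α₂ α₃ hp hσ₁ hσ₁fin t hadm ht
end
end
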